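/- Consider the first cell j = 1, whose Euler-forward cell-average update (using the boundary conventions) is r̄_1^{new} = r̄_1 − λ·ûc_{3/2} + λ·F̂_{3/2} + (Δt/2)·∑_{i=1,2}(c̃_1^i·q_1^i − z₁·r(x_1^i)·P_1^i). Assume all nodal concentration values are strictly positive; z₁ ≥ 0 and for i ∈ {1,2}: 6Δt·z₁·max{P_1^i,0} ≤ 1, if q_1^i ≥ 0 then c̃_1^i ≥ 0, and if q_1^i < 0 then c̃_1^i = c(x_1^i) and 6Δt(−q_1^i) < min{Φ_{1/2}, Φ_{3/2}}; and moreover α > max{u⁺_{3/2}, 0}, 6αλ ≤ Φ_{3/2}, α̃ > D⁺_{3/2}/2, 3Λ·D⁻_{3/2} ≤ Φ_{1/2}, and 6Λα̃ ≤ Φ_{3/2}. Then r̄_1^{new} > 0. -/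

import Mathlib

/-!
Since `μ₁ + μ₂ = 1`, the cell average `r̄₁` splits into three equal parts. The CFL conditions
on `α` and `α̃, D±` make `r̄₁/3 - λ·ûc_{3/2}` and `r̄₁/3 + λ·F̂_{3/2}` nonnegative combinations
of the nodal concentrations, and the two Gauss-point values `r(x₁ⁱ)/6`, which sum to `r̄₁/3`,
each absorb their source term, strictly.
-/

noncomputable section

namespace DG1D

/-- Gauss constant `μ₁ = (3+√3)/6`. -/
def mu1 : ℝ := (3 + Real.sqrt 3) / 6

/-- Gauss constant `μ₂ = (3-√3)/6`. -/
def mu2 : ℝ := (3 - Real.sqrt 3) / 6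

/-- Cell average `r̄_j = (r⁺_{j-1/2} + r⁻_{j+1/2})/2`.  Here `Φ j` denotes the nodal
porosity value `Φ_{j+1/2}` (so `Φ (j-1)` is `Φ_{j-1/2}`), `cP j` denotes the left-node
concentration trace `c⁺_{j-1/2}` of cell `j`, and `cM j` denotes the right-node trace
`c⁻_{j+1/2}` of cell `j`. -/
def rbar (Φ cP cM : ℕ → ℝ) (j : ℕ) : ℝ :=
  (cP j * Φ (j - 1) + cM j * Φ j) / 2

/-- Convective flux `ûc_{j+1/2} = u⁺_{j+1/2}·c⁺_{j+1/2} - α·[c]_{j+1/2}` at the interior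
node `j+1/2` (`u j` denotes `u⁺_{j+1/2}`; `c⁺_{j+1/2} = cP (j+1)`, `c⁻_{j+1/2} = cM j`). -/
def uc (u cP cM : ℕ → ℝ) (α : ℝ) (j : ℕ) : ℝ :=
  u j * cP (j + 1) - α * (cP (j + 1) - cM j)

/-- Diffusive flux `F̂_{j+1/2} = (D⁻·(c_x)⁻ + D⁺·(c_x)⁺)/2 + (α̃/Δx)·[c]_{j+1/2}` at the
interior node `j+1/2`, with `(c_x)⁻_{j+1/2} = (c⁻_{j+1/2} - c⁺_{j-1/2})/Δx` and
`(c_x)⁺_{j+1/2} = (c⁻_{j+3/2} - c⁺_{j+1/2})/Δx`. -/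
def Fhat (Dm Dp cP cM : ℕ → ℝ) (αt Δx : ℝ) (j : ℕ) : ℝ :=
  (Dm j * ((cM j - cP j) / Δx) + Dp j * ((cM (j + 1) - cP (j + 1)) / Δx)) / 2
    + (αt / Δx) * (cP (j + 1) - cM j)

/-- Value of the linear function `r` at Gauss point `i` of cell `j`:
`r(x_j^1) = μ₁·r⁺_{j-1/2} + μ₂·r⁻_{j+1/2}`, `r(x_j^2) = μ₂·r⁺_{j-1/2} + μ₁·r⁻_{j+1/2}`. -/
def rG (Φ cP cM : ℕ → ℝ) (j : ℕ) (i : Fin 2) : ℝ :=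
  if i = 0 then mu1 * (cP j * Φ (j - 1)) + mu2 * (cM j * Φ j)
  else mu2 * (cP j * Φ (j - 1)) + mu1 * (cM j * Φ j)

/-- Value of the linear function `c` at Gauss point `i` of cell `j`. -/
def cG (cP cM : ℕ → ℝ) (j : ℕ) (i : Fin 2) : ℝ :=
  if i = 0 then mu1 * cP j + mu2 * cM j else mu2 * cP j + mu1 * cM j

/-- Value of the linear interpolant of `Φ` at Gauss point `i` of cell `j`. -/
def phiG (Φ : ℕ → ℝ) (j : ℕ) (i : Fin 2) : ℝ :=
  if i = 0 then mu1 * Φ (j - 1) + mu2 * Φ j else mu2 * Φ (j - 1) + mu1 * Φ j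

/-- Convective flux with the boundary conventions `ûc_{1/2} = ûc_{N+1/2} = 0`. -/
def ucB (N : ℕ) (u cP cM : ℕ → ℝ) (α : ℝ) (j : ℕ) : ℝ :=
  if 1 ≤ j ∧ j ≤ N - 1 then uc u cP cM α j else 0

/-- Diffusive flux with the boundary conventions `F̂_{1/2} = F̂_{N+1/2} = 0`. -/
def FhatB (N : ℕ) (Dm Dp cP cM : ℕ → ℝ) (αt Δx : ℝ) (j : ℕ) : ℝ :=
  if 1 ≤ j ∧ j ≤ N - 1 then Fhat Dm Dp cP cM αt Δx j else 0

/-- Velocity flux `û_{j+1/2}` with boundary conventions `û_{1/2} = û_{N+1/2} = 0`. -/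
def uhatB (N : ℕ) (u : ℕ → ℝ) (j : ℕ) : ℝ :=
  if 1 ≤ j ∧ j ≤ N - 1 then u j else 0

/-- The Euler-forward cell-average update
`r̄_j^{new} = r̄_j + λ(ûc_{j-1/2} - ûc_{j+1/2}) - λ(F̂_{j-1/2} - F̂_{j+1/2})
  + (Δt/2)·∑_{i=1,2}(c̃_j^i·q_j^i - z₁·r(x_j^i)·P_j^i)`. -/
def rbarnew (N : ℕ) (Φ cP cM u Dm Dp : ℕ → ℝ) (q ct P : ℕ → Fin 2 → ℝ)
    (α αt z1 Δx Δt : ℝ) (j : ℕ) : ℝ :=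
  rbar Φ cP cM j
    + (Δt / Δx) * (ucB N u cP cM α (j - 1) - ucB N u cP cM α j)
    - (Δt / Δx) * (FhatB N Dm Dp cP cM αt Δx (j - 1) - FhatB N Dm Dp cP cM αt Δx j)
    + (Δt / 2) * ∑ i : Fin 2, (ct j i * q j i - z1 * rG Φ cP cM j i * P j i)


lemma mu1_add_mu2 : mu1 + mu2 = 1 := by
  unfold mu1 mu2; ring

lemma mu2_pos : 0 < mu2 := by
  have : Real.sqrt 3 < 3 := (Real.sqrt_lt' (by norm_num)).2 (by norm_num)
  unfold mu2; linarith

lemma mu1_pos : 0 < mu1 := by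
  unfold mu1; positivity

section Cell

variable (Φ cP cM : ℕ → ℝ) (j : ℕ)

lemma sum_rG : ∑ i : Fin 2, rG Φ cP cM j i = 2 * rbar Φ cP cM j := by
  have := mu1_add_mu2
  simp only [rG, Fin.isValue, Fin.sum_univ_two, ↓reduceIte, one_ne_zero, rbar]
  linear_combination (cP j * Φ (j - 1) + cM j * Φ j) * this

variable {Φ cP cM j}

lemma cG_pos (hP : 0 < cP j) (hM : 0 < cM j) (i : Fin 2) : 0 < cG cP cM j i := by
  have := mu1_pos; have := mu2_pos
  unfold cG; split_ifs <;> positivity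

lemma rG_pos (hΦl : 0 < Φ (j - 1)) (hΦr : 0 < Φ j) (hP : 0 < cP j) (hM : 0 < cM j)
    (i : Fin 2) : 0 < rG Φ cP cM j i := by
  have := mu1_pos; have := mu2_pos
  unfold rG; split_ifs <;> positivity

lemma min_mul_cG_le_rG (hP : 0 ≤ cP j) (hM : 0 ≤ cM j) (i : Fin 2) :
    min (Φ (j - 1)) (Φ j) * cG cP cM j i ≤ rG Φ cP cM j i := by
  have hl : 0 ≤ cP j * (Φ (j - 1) - min (Φ (j - 1)) (Φ j)) :=
    mul_nonneg hP (sub_nonneg.2 (min_le_left _ _))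
  have hr : 0 ≤ cM j * (Φ j - min (Φ (j - 1)) (Φ j)) :=
    mul_nonneg hM (sub_nonneg.2 (min_le_right _ _))
  unfold cG rG; split_ifs <;> nlinarith [mul_nonneg mu1_pos.le hl,
    mul_nonneg mu2_pos.le hl, mul_nonneg mu1_pos.le hr, mul_nonneg mu2_pos.le hr]

lemma mul_uc_le_rbar_div_three {u : ℕ → ℝ} {α lam : ℝ} (hlam : 0 ≤ lam) (hu : u j ≤ α)
    (hCFL : 6 * α * lam ≤ Φ j) (hl : 0 ≤ cP j * Φ (j - 1)) (hM : 0 ≤ cM j)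
    (hP' : 0 ≤ cP (j + 1)) :
    lam * uc u cP cM α j ≤ rbar Φ cP cM j / 3 := by
  have h1 := mul_nonneg hlam (mul_nonneg (sub_nonneg.2 hu) hP')
  have h2 := mul_nonneg hM (sub_nonneg.2 hCFL)
  unfold uc rbar
  linarith



lemma neg_mul_Fhat_le_rbar_div_three {Dm Dp : ℕ → ℝ} {αt Δx Δt : ℝ} (hΔx : Δx ≠ 0)
    (hΛ : 0 ≤ Δt / Δx ^ 2) (hDm : 0 ≤ Dm j) (hDp : 0 ≤ Dp j) (hαt : Dp j ≤ 2 * αt)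
    (hCFLl : 3 * (Δt / Δx ^ 2) * Dm j ≤ Φ (j - 1)) (hCFLr : 6 * (Δt / Δx ^ 2) * αt ≤ Φ j)
    (hP : 0 ≤ cP j) (hM : 0 ≤ cM j) (hP' : 0 ≤ cP (j + 1)) (hM' : 0 ≤ cM (j + 1)) :
    -(Δt / Δx * Fhat Dm Dp cP cM αt Δx j) ≤ rbar Φ cP cM j / 3 := by
  set Λ := Δt / Δx ^ 2
  have hscale : Δt / Δx * Fhat Dm Dp cP cM αt Δx j
      = Λ * ((Dm j * (cM j - cP j) + Dp j * (cM (j + 1) - cP (j + 1))) / 2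
          + αt * (cP (j + 1) - cM j)) := by
    unfold Λ Fhat; field_simp
  have h1 := mul_nonneg hP (sub_nonneg.2 hCFLl)
  have h2 := mul_nonneg hM (sub_nonneg.2 hCFLr)
  have h3 := mul_nonneg hM (mul_nonneg hΛ hDm)
  have h4 := mul_nonneg hM' (mul_nonneg hΛ hDp)
  have h5 := mul_nonneg hP' (mul_nonneg hΛ (sub_nonneg.2 hαt))
  rw [hscale]; unfold rbar
  linarith

/-- Each Gauss point's source term is absorbed by a sixth of the Gauss-point value of `r`:
the pressure sink costs at most half of it, and an extraction `q < 0` at most the other half. -/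
lemma gauss_source_pos {r cg φ Δt z1 P q ct : ℝ} (hr : 0 < r) (hcg : 0 < cg)
    (hφcg : φ * cg ≤ r) (hΔt : 0 ≤ Δt) (hz1 : 0 ≤ z1) (hP : 6 * Δt * z1 * max P 0 ≤ 1)
    (hq1 : 0 ≤ q → 0 ≤ ct) (hq2 : q < 0 → ct = cg ∧ 6 * Δt * (-q) < φ) :
    0 < r / 6 + Δt / 2 * (ct * q - z1 * r * P) := by
  have hsink : Δt * z1 * P ≤ 1 / 6 := by
    have := mul_le_mul_of_nonneg_left (le_max_left P 0) (mul_nonneg hΔt hz1)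
    linarith
  have hpressure : r / 12 ≤ r / 6 - Δt / 2 * (z1 * r * P) := by
    nlinarith [mul_le_mul_of_nonneg_left hsink hr.le]
  rcases le_or_gt 0 q with hq | hq
  · nlinarith [mul_nonneg hΔt (mul_nonneg (hq1 hq) hq)]
  · obtain ⟨rfl, hextract⟩ := hq2 hq
    nlinarith [mul_lt_mul_of_pos_left hextract hcg]

lemma source_sum_pos {q ct P : Fin 2 → ℝ} {Δt z1 : ℝ} (hΦl : 0 < Φ (j - 1)) (hΦr : 0 < Φ j)
    (hcP : 0 < cP j) (hcM : 0 < cM j) (hΔt : 0 ≤ Δt) (hz1 : 0 ≤ z1)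
    (hP : ∀ i, 6 * Δt * z1 * max (P i) 0 ≤ 1) (hq1 : ∀ i, 0 ≤ q i → 0 ≤ ct i)
    (hq2 : ∀ i, q i < 0 → ct i = cG cP cM j i ∧ 6 * Δt * (-q i) < min (Φ (j - 1)) (Φ j)) :
    0 < rbar Φ cP cM j / 3 + Δt / 2 * ∑ i, (ct i * q i - z1 * rG Φ cP cM j i * P i) := by
  have hsplit : rbar Φ cP cM j / 3 + Δt / 2 * ∑ i, (ct i * q i - z1 * rG Φ cP cM j i * P i)
      = ∑ i, (rG Φ cP cM j i / 6 + Δt / 2 * (ct i * q i - z1 * rG Φ cP cM j i * P i)) := by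
    rw [Finset.sum_add_distrib, ← Finset.sum_div, sum_rG, Finset.mul_sum]; ring
  rw [hsplit]
  exact Finset.sum_pos (fun i _ => gauss_source_pos (rG_pos hΦl hΦr hcP hcM i)
    (cG_pos hcP hcM i) (min_mul_cG_le_rG hcP.le hcM.le i) hΔt hz1 (hP i) (hq1 i) (hq2 i))
    Finset.univ_nonempty

end Cell

/-- Lemma 3.4, first cell (1D): positivity of
`r̄_1^{new} = r̄_1 - λ·ûc_{3/2} + λ·F̂_{3/2} + (Δt/2)·∑_{i=1,2}(c̃_1^i·q_1^i - z₁·r(x_1^i)·P_1^i)`. -/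
theorem first_cell_average_positive_1d
    (N : ℕ) (hN : 4 ≤ N) (Δx Δt : ℝ) (hΔx : 0 < Δx) (hΔt : 0 < Δt)
    (Φ cP cM u Dm Dp : ℕ → ℝ) (q ct P : ℕ → Fin 2 → ℝ) (α αt z1 : ℝ)
    (hΦ : ∀ j, j ≤ N → 0 < Φ j)
    (hDm : ∀ j, 1 ≤ j → j ≤ N - 1 → 0 ≤ Dm j)
    (hDp : ∀ j, 1 ≤ j → j ≤ N - 1 → 0 ≤ Dp j)
    -- all nodal concentration values strictly positive
    (hc : ∀ j, 1 ≤ j → j ≤ N → 0 < cP j ∧ 0 < cM j)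
    -- source conditions for cell 1
    (hz1 : 0 ≤ z1)
    (hP : ∀ i : Fin 2, 6 * Δt * z1 * max (P 1 i) 0 ≤ 1)
    (hq1 : ∀ i : Fin 2, 0 ≤ q 1 i → 0 ≤ ct 1 i)
    (hq2 : ∀ i : Fin 2, q 1 i < 0 →
      ct 1 i = cG cP cM 1 i ∧ 6 * Δt * (-q 1 i) < min (Φ 0) (Φ 1))
    -- α > max{u⁺_{3/2}, 0}, 6αλ ≤ Φ_{3/2}
    (hα : max (u 1) 0 < α)
    (hCFL1 : 6 * α * (Δt / Δx) ≤ Φ 1)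
    -- α̃ > D⁺_{3/2}/2, 3Λ·D⁻_{3/2} ≤ Φ_{1/2}, 6Λα̃ ≤ Φ_{3/2}
    (hαt : Dp 1 / 2 < αt)
    (hCFL2 : 3 * (Δt / Δx ^ 2) * Dm 1 ≤ Φ 0)
    (hCFL3 : 6 * (Δt / Δx ^ 2) * αt ≤ Φ 1) :
    0 < rbar Φ cP cM 1
          - (Δt / Δx) * uc u cP cM α 1
          + (Δt / Δx) * Fhat Dm Dp cP cM αt Δx 1
          + (Δt / 2) * ∑ i : Fin 2, (ct 1 i * q 1 i - z1 * rG Φ cP cM 1 i * P 1 i) := by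
  have hΦ0 : 0 < Φ 0 := hΦ 0 (by omega)
  have hΦ1 : 0 < Φ 1 := hΦ 1 (by omega)
  obtain ⟨hcP1, hcM1⟩ := hc 1 le_rfl (by omega)
  obtain ⟨hcP2, hcM2⟩ := hc 2 (by omega) (by omega)
  have hconv : Δt / Δx * uc u cP cM α 1 ≤ rbar Φ cP cM 1 / 3 :=
    mul_uc_le_rbar_div_three (div_pos hΔt hΔx).le ((le_max_left _ _).trans hα.le) hCFL1
      (mul_pos hcP1 hΦ0).le hcM1.le hcP2.le
  have hdiff : -(Δt / Δx * Fhat Dm Dp cP cM αt Δx 1) ≤ rbar Φ cP cM 1 / 3 :=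
    neg_mul_Fhat_le_rbar_div_three hΔx.ne' (by positivity) (hDm 1 le_rfl (by omega))
      (hDp 1 le_rfl (by omega)) (by linarith) hCFL2 hCFL3 hcP1.le hcM1.le hcP2.le hcM2.le
  have hsrc := source_sum_pos hΦ0 hΦ1 hcP1 hcM1 hΔt.le hz1 hP hq1 hq2
  linarith

end DG1D
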